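/- Let μ ∈ M(𝕋^d), let Λ ⊂ ℤ^d be a finite subset, and let n ∈ Λ. Suppose there exists a positive measure ν ∈ M(𝕋^d) such that ν̂(m) = μ̂(m + n) for all m ∈ Λ − n. Then n ∈ Γ(μ,Λ), i.e. |μ̂(n)| = ε(μ,Λ), and M_n ν is a minimal extrapolation of μ from Λ, where M_n ν is the measure defined by d(M_n ν)(x) = e^{2πi n·x} dν(x). -/

import Mathlib

/- Setting: `M(𝕋^d)`, the space of complex bounded Radon measures on the `d`-dimensional
torus, is identified with the continuous dual of `C(𝕋^d, ℂ)` via the Riesz representation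
theorem; the total variation norm corresponds to the operator norm. -/

open MeasureTheory Complex Real

noncomputable section


/-- The `d`-dimensional torus `𝕋^d = (ℝ/ℤ)^d`. -/
abbrev Torus (d : ℕ) : Type := Fin d → AddCircle (1 : ℝ)

/-- The character `x ↦ e^{2πi m·x}` on the torus, for `m ∈ ℤ^d`. -/
def torusChar {d : ℕ} (m : Fin d → ℤ) : C(Torus d, ℂ) :=
  ⟨fun x => ∏ i, fourier (m i) (x i), by
    refine continuous_finsetProd _ fun i _ => ?_
    exact (map_continuous (fourier (m i))).comp (continuous_apply i)⟩

/-- The space `M(𝕋^d)` of complex bounded Radon measures on the torus, identified (via the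
Riesz representation theorem) with the continuous dual of `C(𝕋^d, ℂ)`; the total variation
norm is the operator norm. -/
abbrev TorusMeasure (d : ℕ) : Type := C(Torus d, ℂ) →L[ℂ] ℂ

/-- The Fourier coefficient `μ̂(m) = ∫_{𝕋^d} e^{-2πi m·x} dμ(x)`. -/
def mFourierCoeff {d : ℕ} (μ : TorusMeasure d) (m : Fin d → ℤ) : ℂ :=
  μ (torusChar (-m))

/-- `ν` is an extrapolation of `μ` from `Λ` if `ν̂ = μ̂` on `Λ`. -/
def IsExtrapolation {d : ℕ} (μ : TorusMeasure d) (Λ : Finset (Fin d → ℤ))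
    (ν : TorusMeasure d) : Prop :=
  ∀ m ∈ Λ, mFourierCoeff ν m = mFourierCoeff μ m

/-- `ε(μ,Λ) = inf {‖σ‖ : σ ∈ M(𝕋^d), σ̂ = μ̂ on Λ}`. -/
def minExtNorm {d : ℕ} (μ : TorusMeasure d) (Λ : Finset (Fin d → ℤ)) : ℝ :=
  sInf ((fun ν => ‖ν‖) '' {ν | IsExtrapolation μ Λ ν})

/-- `ν` is a minimal extrapolation of `μ` from `Λ`, i.e. `ν ∈ 𝓔(μ,Λ)`:
an extrapolation whose total variation norm equals `ε(μ,Λ)`. -/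
def IsMinimalExtrapolation {d : ℕ} (μ : TorusMeasure d) (Λ : Finset (Fin d → ℤ))
    (ν : TorusMeasure d) : Prop :=
  IsExtrapolation μ Λ ν ∧ ‖ν‖ = minExtNorm μ Λ

/-- `Γ(μ,Λ) = {m ∈ Λ : |μ̂(m)| = ε(μ,Λ)}`. -/
def gammaSet {d : ℕ} (μ : TorusMeasure d) (Λ : Finset (Fin d → ℤ)) : Set (Fin d → ℤ) :=
  {m | m ∈ Λ ∧ ‖mFourierCoeff μ m‖ = minExtNorm μ Λ}

/-- The measure `ν` is supported in the set `S`: it annihilates every continuous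
function vanishing on `S` (for closed `S` this says `supp(ν) ⊆ S`). -/
def SupportedIn {d : ℕ} (ν : TorusMeasure d) (S : Set (Torus d)) : Prop :=
  ∀ f : C(Torus d, ℂ), (∀ x ∈ S, f x = 0) → ν f = 0

/-- The pairing `⟨f,μ⟩ = ∫_{𝕋^d} f(x) conj(dμ(x)) = conj (μ (conj f))`. -/
def mPairing {d : ℕ} (f : C(Torus d, ℂ)) (μ : TorusMeasure d) : ℂ :=
  starRingEnd ℂ (μ (star f))

/-- `C(𝕋^d;Λ)`: the subspace of trigonometric polynomials
`f(x) = ∑_{m ∈ Λ} a_m e^{2πi m·x}` with frequencies in `Λ`. -/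
def trigPoly {d : ℕ} (Λ : Finset (Fin d → ℤ)) : Submodule ℂ C(Torus d, ℂ) :=
  Submodule.span ℂ (torusChar '' (Λ : Set (Fin d → ℤ)))

/-- For a continuous `g` with `‖g‖_∞ ≤ 1`, the assertion that `sign(ν) = g`
`ν`-almost everywhere, expressed through the standard equivalent condition
`⟨g,ν⟩ = ‖ν‖` (obtained by integrating the Radon–Nikodym identity
`∫ f d|ν| = ∫ f conj(sign ν) dν` against `f = conj g` and using `|ν|(𝕋^d) = ‖ν‖`). -/
def SignEqAE {d : ℕ} (ν : TorusMeasure d) (g : C(Torus d, ℂ)) : Prop :=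
  mPairing g ν = (‖ν‖ : ℂ)

/-- `ν` is a positive measure: it takes nonnegative real values on nonnegative real-valued
continuous functions. -/
def IsPositiveMeasure {d : ℕ} (ν : TorusMeasure d) : Prop :=
  ∀ f : C(Torus d, ℂ), (∀ x, (f x).im = 0 ∧ 0 ≤ (f x).re) → (ν f).im = 0 ∧ 0 ≤ (ν f).re

/-- The Dirac measure `δ_x`: evaluation at `x`. -/
def diracM {d : ℕ} (x : Torus d) : TorusMeasure d :=
  ContinuousMap.evalCLM ℂ x

/-- The modulation `M_n ν`, defined by `d(M_n ν)(x) = e^{2πi n·x} dν(x)`. -/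
def modulateM {d : ℕ} (n : Fin d → ℤ) (ν : TorusMeasure d) : TorusMeasure d :=
  ν.comp (ContinuousLinearMap.mul ℂ C(Torus d, ℂ) (torusChar n))

/-! Every extrapolation `σ` of `μ` from `Λ` satisfies `|μ̂(n)| = |σ̂(n)| ≤ ‖σ‖`, so
`|μ̂(n)| ≤ ε(μ,Λ)`. Conversely `M_n ν` has the Fourier coefficients of `μ` on `Λ`, and since
multiplying by a unimodular character does not increase the norm and a positive measure has norm
`ν̂(0) = μ̂(n)`, we get `‖M_n ν‖ ≤ |μ̂(n)|`. -/

section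

variable {d : ℕ}

lemma norm_torusChar_apply (m : Fin d → ℤ) (x : Torus d) : ‖torusChar m x‖ = 1 := by
  simp [torusChar, norm_prod, Circle.norm_coe]

lemma norm_torusChar_le (m : Fin d → ℤ) : ‖torusChar m‖ ≤ 1 :=
  (ContinuousMap.norm_le _ zero_le_one).mpr fun x => (norm_torusChar_apply m x).le

lemma torusChar_mul (m k : Fin d → ℤ) : torusChar m * torusChar k = torusChar (m + k) := by
  ext x
  simp only [torusChar, ContinuousMap.mul_apply, ContinuousMap.coe_mk, ← Finset.prod_mul_distrib]
  exact Finset.prod_congr rfl fun i _ => fourier_add.symm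

lemma torusChar_zero : torusChar (0 : Fin d → ℤ) = 1 := by
  ext x
  simp [torusChar]

lemma mFourierCoeff_zero (ν : TorusMeasure d) : mFourierCoeff ν 0 = ν 1 := by
  rw [mFourierCoeff, neg_zero, torusChar_zero]

lemma norm_mFourierCoeff_le (σ : TorusMeasure d) (m : Fin d → ℤ) :
    ‖mFourierCoeff σ m‖ ≤ ‖σ‖ :=
  σ.le_of_opNorm_le_of_le le_rfl (norm_torusChar_le (-m)) |>.trans_eq (mul_one _)

lemma mFourierCoeff_modulateM (n m : Fin d → ℤ) (ν : TorusMeasure d) :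
    mFourierCoeff (modulateM n ν) m = mFourierCoeff ν (m - n) := by
  simp only [mFourierCoeff, modulateM, ContinuousLinearMap.comp_apply,
    ContinuousLinearMap.mul_apply', torusChar_mul]
  congr 2
  abel

lemma norm_modulateM_le (n : Fin d → ℤ) (ν : TorusMeasure d) : ‖modulateM n ν‖ ≤ ‖ν‖ :=
  calc ‖modulateM n ν‖ ≤ ‖ν‖ * ‖ContinuousLinearMap.mul ℂ C(Torus d, ℂ) (torusChar n)‖ :=
        ν.opNorm_comp_le _
    _ ≤ ‖ν‖ * 1 := by
        gcongr
        exact (ContinuousLinearMap.opNorm_mul_apply_le ℂ _ _).trans (norm_torusChar_le n)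
    _ = ‖ν‖ := mul_one _

end

namespace IsPositiveMeasure

variable {d : ℕ} {ν : TorusMeasure d}

lemma apply_one (hν : IsPositiveMeasure ν) : (ν 1).im = 0 ∧ 0 ≤ (ν 1).re :=
  hν 1 fun x => by simp

lemma norm_apply_one (hν : IsPositiveMeasure ν) : ‖ν 1‖ = (ν 1).re := by
  obtain ⟨him, hre⟩ := hν.apply_one
  rw [← Complex.re_add_im (ν 1), him, Complex.ofReal_zero, zero_mul, add_zero,
    Complex.norm_real, Real.norm_of_nonneg hre, Complex.ofReal_re]

/-- Write `f = (f + ‖f‖) - ‖f‖` with both terms nonnegative. -/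
lemma im_apply_eq_zero (hν : IsPositiveMeasure ν) {f : C(Torus d, ℂ)}
    (hf : ∀ x, (f x).im = 0) : (ν f).im = 0 := by
  have hshift := hν (f + (‖f‖ : ℂ) • 1) fun x => by
    have := (abs_le.mp ((Complex.abs_re_le_norm (f x)).trans (f.norm_coe_le_norm x))).1
    simp only [ContinuousMap.add_apply, ContinuousMap.smul_apply, ContinuousMap.one_apply,
      smul_eq_mul, mul_one, Complex.add_re, Complex.add_im, Complex.ofReal_re, Complex.ofReal_im]
    exact ⟨by simp [hf x], by linarith⟩
  simpa [map_add, map_smul, hν.apply_one.1] using hshift.1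

lemma re_apply_le (hν : IsPositiveMeasure ν) (f : C(Torus d, ℂ)) :
    (ν f).re ≤ (ν 1).re * ‖f‖ := by
  let p : C(Torus d, ℂ) := ⟨fun x => ((f x).re : ℂ), by fun_prop⟩
  let q : C(Torus d, ℂ) := ⟨fun x => ((f x).im : ℂ), by fun_prop⟩
  have hf : f = p + Complex.I • q := by
    ext x
    simp [p, q, mul_comm Complex.I, Complex.re_add_im]
  have hq : (ν q).im = 0 := hν.im_apply_eq_zero fun x => by simp [q]
  have hre : (ν f).re = (ν p).re := by
    rw [hf, map_add, map_smul]
    simp [hq]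
  have hdom := hν ((‖f‖ : ℂ) • 1 - p) fun x => by
    have := (Complex.re_le_norm (f x)).trans (f.norm_coe_le_norm x)
    simp [p, this]
  have : 0 ≤ ‖f‖ * (ν 1).re - (ν p).re := by simpa [map_sub, map_smul] using hdom.2
  linarith

lemma norm_apply_le (hν : IsPositiveMeasure ν) (f : C(Torus d, ℂ)) :
    ‖ν f‖ ≤ (ν 1).re * ‖f‖ := by
  -- rotate `ν f` onto the nonnegative real axis
  set u := Complex.exp (↑(-(ν f).arg) * Complex.I)
  have hu : ‖u‖ = 1 := Complex.norm_exp_ofReal_mul_I _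
  have hrot : ν (u • f) = ‖ν f‖ := by
    rw [map_smul, smul_eq_mul]
    conv_lhs => rw [← Complex.norm_mul_exp_arg_mul_I (ν f)]
    rw [mul_left_comm, ← Complex.exp_add, Complex.ofReal_neg, neg_mul, neg_add_cancel,
      Complex.exp_zero, mul_one]
  calc ‖ν f‖ = (ν (u • f)).re := by rw [hrot, Complex.ofReal_re]
    _ ≤ (ν 1).re * ‖u • f‖ := hν.re_apply_le _
    _ = (ν 1).re * ‖f‖ := by rw [norm_smul, hu, one_mul]

lemma norm_eq (hν : IsPositiveMeasure ν) : ‖ν‖ = ‖ν 1‖ := by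
  refine le_antisymm ?_ ?_
  · rw [hν.norm_apply_one]
    exact ν.opNorm_le_bound hν.apply_one.2 hν.norm_apply_le
  · exact ν.le_of_opNorm_le_of_le le_rfl
      ((ContinuousMap.norm_le _ zero_le_one).mpr fun x => by simp) |>.trans_eq (mul_one _)

end IsPositiveMeasure

section

variable {d : ℕ} {μ σ : TorusMeasure d} {Λ : Finset (Fin d → ℤ)}

lemma minExtNorm_le (hσ : IsExtrapolation μ Λ σ) : minExtNorm μ Λ ≤ ‖σ‖ :=
  csInf_le ⟨0, by rintro _ ⟨τ, -, rfl⟩; exact norm_nonneg τ⟩ ⟨σ, hσ, rfl⟩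

lemma norm_mFourierCoeff_le_minExtNorm {m : Fin d → ℤ} (hm : m ∈ Λ)
    (hσ : IsExtrapolation μ Λ σ) : ‖mFourierCoeff μ m‖ ≤ minExtNorm μ Λ := by
  refine le_csInf ⟨_, σ, hσ, rfl⟩ ?_
  rintro _ ⟨τ, hτ, rfl⟩
  exact hτ m hm ▸ norm_mFourierCoeff_le τ m

lemma mem_gammaSet_and_isMinimalExtrapolation_of_norm_le {m : Fin d → ℤ} (hm : m ∈ Λ)
    (hσ : IsExtrapolation μ Λ σ) (hle : ‖σ‖ ≤ ‖mFourierCoeff μ m‖) :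
    m ∈ gammaSet μ Λ ∧ IsMinimalExtrapolation μ Λ σ := by
  have hlow := norm_mFourierCoeff_le_minExtNorm hm hσ
  have hup := minExtNorm_le hσ
  exact ⟨⟨hm, by linarith⟩, hσ, by linarith⟩

end

/-- **Proposition 2.6.** If `n ∈ Λ` and there is a positive measure `ν` with
`ν̂(m) = μ̂(m+n)` for all `m ∈ Λ − n`, then `n ∈ Γ(μ,Λ)` and the modulation `M_n ν` is a
minimal extrapolation of `μ` from `Λ`. -/
theorem modulate_posDef_extension_isMinimalExtrapolation {d : ℕ} (μ : TorusMeasure d)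
    (Λ : Finset (Fin d → ℤ)) (n : Fin d → ℤ) (hn : n ∈ Λ) (ν : TorusMeasure d)
    (hpos : IsPositiveMeasure ν)
    (hext : ∀ m : Fin d → ℤ, m + n ∈ Λ → mFourierCoeff ν m = mFourierCoeff μ (m + n)) :
    n ∈ gammaSet μ Λ ∧ IsMinimalExtrapolation μ Λ (modulateM n ν) := by
  have hM : IsExtrapolation μ Λ (modulateM n ν) := fun m hm => by
    rw [mFourierCoeff_modulateM, hext (m - n) (by simpa using hm), sub_add_cancel]
  refine mem_gammaSet_and_isMinimalExtrapolation_of_norm_le hn hM ?_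
  calc ‖modulateM n ν‖ ≤ ‖ν‖ := norm_modulateM_le n ν
    _ = ‖mFourierCoeff ν 0‖ := by rw [hpos.norm_eq, mFourierCoeff_zero]
    _ = ‖mFourierCoeff μ n‖ := by rw [hext 0 (by simpa using hn), zero_add]

end
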